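/- Suppose the solution to the parameter-dependent boundary-value problem L(ε)y = f(·,ε), B(ε)y = c(ε) depends continuously on the parameter ε at ε = 0, i.e., conditions (∗) and (∗∗) hold, with ε₁ as in (∗). Then for every ε ∈ [0, ε₁) the operator (L(ε), B(ε)) : (C^{n+r,α})^m → (C^{n,α})^m × ℂ^{rm} is invertible; its inverse converges strongly to (L(0), B(0))^{-1} as ε → 0+, i.e., (L(ε), B(ε))^{-1}(f, c) → (L(0), B(0))^{-1}(f, c) in (C^{n+r,α})^m for all f ∈ (C^{n,α})^m and c ∈ ℂ^{rm}; and there exist κ₂ > 0 and ε₂ ∈ (0, ε₁) such that ‖(L(ε), B(ε))^{-1}‖ ≤ κ₂ for every ε ∈ [0, ε₂). -/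

import Mathlib

open Set Filter Topology

noncomputable section

/-- `x` belongs to the Hölder space `C^{n,α}([a,b],ℂ)`: it is `n` times continuously
differentiable on `[a,b]` and the Hölder seminorm of `x⁽ⁿ⁾` is finite. -/
def HolMem (a b : ℝ) (n : ℕ) (α : ℝ) (x : ℝ → ℂ) : Prop :=
  ContDiffOn ℝ n x (Set.Icc a b) ∧
    ∃ C : ℝ, ∀ t₁ ∈ Set.Icc a b, ∀ t₂ ∈ Set.Icc a b, t₁ < t₂ →
      ‖iteratedDerivWithin n x (Set.Icc a b) t₂ - iteratedDerivWithin n x (Set.Icc a b) t₁‖ ≤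
        C * (t₂ - t₁) ^ α

/-- The Hölder seminorm `‖x‖'_{n,α}`. -/
def holSemiNorm (a b : ℝ) (n : ℕ) (α : ℝ) (x : ℝ → ℂ) : ℝ :=
  sSup { s : ℝ | ∃ t₁ ∈ Set.Icc a b, ∃ t₂ ∈ Set.Icc a b, t₁ < t₂ ∧
    s = ‖iteratedDerivWithin n x (Set.Icc a b) t₂ - iteratedDerivWithin n x (Set.Icc a b) t₁‖ /
        (t₂ - t₁) ^ α }

/-- The Hölder norm `‖x‖_{n,α} = ∑_{j=0}^n max_{[a,b]} |x⁽ʲ⁾| + ‖x‖'_{n,α}`. -/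
def holNorm (a b : ℝ) (n : ℕ) (α : ℝ) (x : ℝ → ℂ) : ℝ :=
  (∑ j ∈ Finset.range (n + 1),
      sSup { s : ℝ | ∃ t ∈ Set.Icc a b, s = ‖iteratedDerivWithin j x (Set.Icc a b) t‖ }) +
    holSemiNorm a b n α x

/-- Vector-valued Hölder class `(C^{n,α})^k`. -/
def vHolMem (a b : ℝ) (n : ℕ) (α : ℝ) {k : ℕ} (x : ℝ → (Fin k → ℂ)) : Prop :=
  ∀ i, HolMem a b n α (fun t => x t i)

/-- Norm on `(C^{n,α})^k`: the sum of the norms of the entries. -/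
def vHolNorm (a b : ℝ) (n : ℕ) (α : ℝ) {k : ℕ} (x : ℝ → (Fin k → ℂ)) : ℝ :=
  ∑ i, holNorm a b n α (fun t => x t i)

/-- Matrix-valued Hölder class `(C^{n,α})^{k×l}`. -/
def mHolMem (a b : ℝ) (n : ℕ) (α : ℝ) {k l : ℕ} (X : ℝ → Matrix (Fin k) (Fin l) ℂ) : Prop :=
  ∀ i j, HolMem a b n α (fun t => X t i j)

/-- Norm on `(C^{n,α})^{k×l}`: the sum of the norms of the entries. -/
def mHolNorm (a b : ℝ) (n : ℕ) (α : ℝ) {k l : ℕ} (X : ℝ → Matrix (Fin k) (Fin l) ℂ) : ℝ :=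
  ∑ i, ∑ j, holNorm a b n α (fun t => X t i j)

/-- Entrywise `p`-th derivative of a vector-valued function on `[a,b]`. -/
def vDeriv (a b : ℝ) (p : ℕ) {k : ℕ} (y : ℝ → (Fin k → ℂ)) : ℝ → (Fin k → ℂ) :=
  fun t i => iteratedDerivWithin p (fun s => y s i) (Set.Icc a b) t

/-- Entrywise `p`-th derivative of a matrix-valued function on `[a,b]`. -/
def mDeriv (a b : ℝ) (p : ℕ) {k l : ℕ} (Y : ℝ → Matrix (Fin k) (Fin l) ℂ) :
    ℝ → Matrix (Fin k) (Fin l) ℂ :=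
  fun t i j => iteratedDerivWithin p (fun s => Y s i j) (Set.Icc a b) t

/-- The differential expression `(L y)(t) = y⁽ʳ⁾(t) + ∑_{j=1}^r A_{r-j}(t) y⁽ʳ⁻ʲ⁾(t)`;
here `A j` denotes the coefficient matrix of `y⁽ʲ⁾`, for `0 ≤ j ≤ r-1`. -/
def Lop (a b : ℝ) (r : ℕ) {m : ℕ} (A : Fin r → ℝ → Matrix (Fin m) (Fin m) ℂ)
    (y : ℝ → (Fin m → ℂ)) : ℝ → (Fin m → ℂ) :=
  fun t => vDeriv a b r y t + ∑ j : Fin r, (A j t).mulVec (vDeriv a b (j : ℕ) y t)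

/-- The matrix analogue of `Lop`, applied to matrix-valued functions. -/
def LopM (a b : ℝ) (r : ℕ) {m k : ℕ} (A : Fin r → ℝ → Matrix (Fin m) (Fin m) ℂ)
    (Z : ℝ → Matrix (Fin m) (Fin k) ℂ) : ℝ → Matrix (Fin m) (Fin k) ℂ :=
  fun t => mDeriv a b r Z t + ∑ j : Fin r, A j t * mDeriv a b (j : ℕ) Z t

/-- `y` is a solution in `(C^{n+r,α})^m` of the problem `L y = f` on `[a,b]`, `B y = c`. -/
def IsSol (a b : ℝ) (n : ℕ) (α : ℝ) (r m : ℕ)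
    (A : Fin r → ℝ → Matrix (Fin m) (Fin m) ℂ)
    (B : (ℝ → (Fin m → ℂ)) →ₗ[ℂ] (Fin (r * m) → ℂ))
    (f : ℝ → (Fin m → ℂ)) (c : Fin (r * m) → ℂ) (y : ℝ → (Fin m → ℂ)) : Prop :=
  vHolMem a b (n + r) α y ∧ (∀ t ∈ Set.Icc a b, Lop a b r A y t = f t) ∧ B y = c

/-- Limit Condition (I): `A_{r-j}(·,ε) → A_{r-j}(·,0)` in `(C^{n,α})^{m×m}` as `ε → 0+`. -/
def CondI (a b : ℝ) (n : ℕ) (α : ℝ) (r m : ℕ)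
    (A : ℝ → Fin r → ℝ → Matrix (Fin m) (Fin m) ℂ) : Prop :=
  ∀ j : Fin r,
    Tendsto (fun ε => mHolNorm a b n α (fun t => A ε j t - A 0 j t))
      (nhdsWithin 0 (Set.Ioi 0)) (nhds 0)

/-- Limit Condition (II): `B(ε)y → B(0)y` in `ℂ^{rm}` as `ε → 0+`,
for every `y ∈ (C^{n+r,α})^m`. -/
def CondII (a b : ℝ) (n : ℕ) (α : ℝ) (r m : ℕ)
    (B : ℝ → (ℝ → (Fin m → ℂ)) →ₗ[ℂ] (Fin (r * m) → ℂ)) : Prop :=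
  ∀ y : ℝ → (Fin m → ℂ), vHolMem a b (n + r) α y →
    Tendsto (fun ε => B ε y) (nhdsWithin 0 (Set.Ioi 0)) (nhds (B 0 y))

/-- Condition (0): the homogeneous problem `L(0)y = 0`, `B(0)y = 0` has only the
trivial solution in `(C^{n+r,α})^m`. -/
def Cond0 (a b : ℝ) (n : ℕ) (α : ℝ) (r m : ℕ)
    (A : Fin r → ℝ → Matrix (Fin m) (Fin m) ℂ)
    (B : (ℝ → (Fin m → ℂ)) →ₗ[ℂ] (Fin (r * m) → ℂ)) : Prop :=
  ∀ y : ℝ → (Fin m → ℂ), vHolMem a b (n + r) α y →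
    (∀ t ∈ Set.Icc a b, Lop a b r A y t = 0) → B y = 0 →
    ∀ t ∈ Set.Icc a b, y t = 0

/-- Condition (∗): for every `ε ∈ [0,ε₁)` and arbitrary data `f ∈ (C^{n,α})^m`, `c ∈ ℂ^{rm}`,
the problem `L(ε)y = f`, `B(ε)y = c` has a unique solution `y ∈ (C^{n+r,α})^m`
(uniqueness is understood as equality on `[a,b]`). -/
def CondStar (a b : ℝ) (n : ℕ) (α : ℝ) (r m : ℕ) (ε₁ : ℝ)
    (A : ℝ → Fin r → ℝ → Matrix (Fin m) (Fin m) ℂ)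
    (B : ℝ → (ℝ → (Fin m → ℂ)) →ₗ[ℂ] (Fin (r * m) → ℂ)) : Prop :=
  ∀ ε ∈ Set.Ico (0 : ℝ) ε₁, ∀ f : ℝ → (Fin m → ℂ), vHolMem a b n α f →
    ∀ c : Fin (r * m) → ℂ,
      ∃ y, IsSol a b n α r m (A ε) (B ε) f c y ∧
        ∀ y', IsSol a b n α r m (A ε) (B ε) f c y' → Set.EqOn y' y (Set.Icc a b)

/-- Condition (∗∗): if `f(·,ε) → f(·,0)` in `(C^{n,α})^m` and `c(ε) → c(0)` in `ℂ^{rm}`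
as `ε → 0+`, then the solutions satisfy `y(·,ε) → y(·,0)` in `(C^{n+r,α})^m`. -/
def CondStarStar (a b : ℝ) (n : ℕ) (α : ℝ) (r m : ℕ) (ε₁ : ℝ)
    (A : ℝ → Fin r → ℝ → Matrix (Fin m) (Fin m) ℂ)
    (B : ℝ → (ℝ → (Fin m → ℂ)) →ₗ[ℂ] (Fin (r * m) → ℂ)) : Prop :=
  ∀ (f : ℝ → ℝ → (Fin m → ℂ)) (c : ℝ → Fin (r * m) → ℂ) (y : ℝ → ℝ → (Fin m → ℂ)),
    (∀ ε ∈ Set.Ico (0 : ℝ) ε₁, vHolMem a b n α (f ε) ∧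
      IsSol a b n α r m (A ε) (B ε) (f ε) (c ε) (y ε)) →
    Tendsto (fun ε => vHolNorm a b n α (fun t => f ε t - f 0 t))
      (nhdsWithin 0 (Set.Ioi 0)) (nhds 0) →
    Tendsto c (nhdsWithin 0 (Set.Ioi 0)) (nhds (c 0)) →
    Tendsto (fun ε => vHolNorm a b (n + r) α (fun t => y ε t - y 0 t))
      (nhdsWithin 0 (Set.Ioi 0)) (nhds 0)


/-!
Part (∗) is the invertibility claim, and (∗∗) applied to constant data is the strong
convergence of the inverses. For the uniform bound: if no bound held on any interval `(0, δ)`,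
rescaling would give solutions with `‖y‖ = 1` and data tending to zero at points `εₖ → 0+`;
glued into a single family indexed by `ε` (and zero elsewhere) they contradict (∗∗). A bound `κ`
on `(0, δ)` also holds at `ε = 0`, since for fixed data the solution at `0` is the limit of the
solutions at `ε > 0`.
-/

open scoped Pointwise

def derivNormSet (a b : ℝ) (j : ℕ) (x : ℝ → ℂ) : Set ℝ :=
  {s : ℝ | ∃ t ∈ Set.Icc a b, s = ‖iteratedDerivWithin j x (Set.Icc a b) t‖}

def holQuotSet (a b : ℝ) (p : ℕ) (α : ℝ) (x : ℝ → ℂ) : Set ℝ :=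
  {s : ℝ | ∃ t₁ ∈ Set.Icc a b, ∃ t₂ ∈ Set.Icc a b, t₁ < t₂ ∧
    s = ‖iteratedDerivWithin p x (Set.Icc a b) t₂ - iteratedDerivWithin p x (Set.Icc a b) t₁‖ /
        (t₂ - t₁) ^ α}

section HolderNorm

variable {a b : ℝ} {p : ℕ} {α : ℝ}

lemma holNorm_eq (x : ℝ → ℂ) :
    holNorm a b p α x =
      (∑ j ∈ Finset.range (p + 1), sSup (derivNormSet a b j x)) + sSup (holQuotSet a b p α x) :=
  rfl

lemma sSup_derivNormSet_nonneg (j : ℕ) (x : ℝ → ℂ) : 0 ≤ sSup (derivNormSet a b j x) :=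
  Real.sSup_nonneg <| by
    rintro s ⟨t, -, rfl⟩
    positivity

lemma sSup_holQuotSet_nonneg (x : ℝ → ℂ) : 0 ≤ sSup (holQuotSet a b p α x) :=
  Real.sSup_nonneg <| by
    rintro s ⟨t₁, -, t₂, -, hlt, rfl⟩
    exact div_nonneg (norm_nonneg _) (Real.rpow_nonneg (sub_nonneg.2 hlt.le) α)

lemma holNorm_nonneg (x : ℝ → ℂ) : 0 ≤ holNorm a b p α x :=
  add_nonneg (Finset.sum_nonneg fun j _ => sSup_derivNormSet_nonneg j x)
    (sSup_holQuotSet_nonneg x)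

lemma derivNormSet_bddAbove (hab : a < b) {j : ℕ} (hj : j ≤ p) {x : ℝ → ℂ}
    (hx : ContDiffOn ℝ p x (Set.Icc a b)) : BddAbove (derivNormSet a b j x) := by
  have hc : ContinuousOn (fun t => ‖iteratedDerivWithin j x (Set.Icc a b) t‖) (Set.Icc a b) :=
    (hx.continuousOn_iteratedDerivWithin (by exact_mod_cast hj) (uniqueDiffOn_Icc hab)).norm
  refine (isCompact_Icc.bddAbove_image hc).mono ?_
  rintro s ⟨t, ht, rfl⟩
  exact ⟨t, ht, rfl⟩

lemma holQuotSet_bddAbove {x : ℝ → ℂ} (hx : HolMem a b p α x) :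
    BddAbove (holQuotSet a b p α x) := by
  obtain ⟨-, C, hC⟩ := hx
  refine ⟨C, ?_⟩
  rintro s ⟨t₁, h₁, t₂, h₂, hlt, rfl⟩
  rw [div_le_iff₀ (Real.rpow_pos_of_pos (sub_pos.2 hlt) α)]
  exact hC t₁ h₁ t₂ h₂ hlt

lemma derivNormSet_const_smul (j : ℕ) (τ : ℂ) (x : ℝ → ℂ) :
    derivNormSet a b j (fun t => τ • x t) = ‖τ‖ • derivNormSet a b j x := by
  have hnorm : ∀ t, ‖iteratedDerivWithin j (fun t => τ • x t) (Set.Icc a b) t‖ =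
      ‖τ‖ • ‖iteratedDerivWithin j x (Set.Icc a b) t‖ := fun t => by
    rw [iteratedDerivWithin_fun_const_smul_field, norm_smul, smul_eq_mul]
  ext s
  simp only [derivNormSet, hnorm, Set.mem_smul_set]
  constructor
  · rintro ⟨t, ht, rfl⟩
    exact ⟨_, ⟨t, ht, rfl⟩, rfl⟩
  · rintro ⟨_, ⟨t, ht, rfl⟩, rfl⟩
    exact ⟨t, ht, rfl⟩

lemma holQuotSet_const_smul (τ : ℂ) (x : ℝ → ℂ) :
    holQuotSet a b p α (fun t => τ • x t) = ‖τ‖ • holQuotSet a b p α x := by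
  have hquot : ∀ t₁ t₂, ‖iteratedDerivWithin p (fun t => τ • x t) (Set.Icc a b) t₂ -
        iteratedDerivWithin p (fun t => τ • x t) (Set.Icc a b) t₁‖ / (t₂ - t₁) ^ α =
      ‖τ‖ • (‖iteratedDerivWithin p x (Set.Icc a b) t₂ -
        iteratedDerivWithin p x (Set.Icc a b) t₁‖ / (t₂ - t₁) ^ α) := fun t₁ t₂ => by
    rw [iteratedDerivWithin_fun_const_smul_field, iteratedDerivWithin_fun_const_smul_field,
      ← smul_sub, norm_smul, smul_eq_mul, mul_div_assoc]
  ext s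
  simp only [holQuotSet, hquot, Set.mem_smul_set]
  constructor
  · rintro ⟨t₁, h₁, t₂, h₂, hlt, rfl⟩
    exact ⟨_, ⟨t₁, h₁, t₂, h₂, hlt, rfl⟩, rfl⟩
  · rintro ⟨_, ⟨t₁, h₁, t₂, h₂, hlt, rfl⟩, rfl⟩
    exact ⟨t₁, h₁, t₂, h₂, hlt, rfl⟩

lemma holNorm_const_smul (τ : ℂ) (x : ℝ → ℂ) :
    holNorm a b p α (fun t => τ • x t) = ‖τ‖ * holNorm a b p α x := by
  rw [holNorm_eq, holNorm_eq, holQuotSet_const_smul, Real.sSup_smul_of_nonneg (norm_nonneg τ),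
    mul_add, Finset.mul_sum]
  congr 1
  refine Finset.sum_congr rfl fun j _ => ?_
  rw [derivNormSet_const_smul, Real.sSup_smul_of_nonneg (norm_nonneg τ), smul_eq_mul]

lemma holNorm_zero : holNorm a b p α (fun _ => 0) = 0 := by
  simpa using holNorm_const_smul (a := a) (b := b) (p := p) (α := α) 0 (fun _ => 0)

lemma HolMem.zero : HolMem a b p α (fun _ => 0) :=
  ⟨contDiffOn_const, 0, fun t₁ _ t₂ _ _ => by simp⟩

lemma HolMem.const_smul {x : ℝ → ℂ} (hx : HolMem a b p α x) (τ : ℂ) :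
    HolMem a b p α (fun t => τ • x t) := by
  obtain ⟨hcd, C, hC⟩ := hx
  refine ⟨hcd.const_smul τ, ‖τ‖ * C, fun t₁ h₁ t₂ h₂ hlt => ?_⟩
  simp only [iteratedDerivWithin_fun_const_smul_field, ← smul_sub, norm_smul, mul_assoc]
  exact mul_le_mul_of_nonneg_left (hC t₁ h₁ t₂ h₂ hlt) (norm_nonneg τ)

lemma iteratedDerivWithin_Icc_sub (hab : a < b) {j : ℕ} (hj : j ≤ p) {x z : ℝ → ℂ}
    (hx : ContDiffOn ℝ p x (Set.Icc a b)) (hz : ContDiffOn ℝ p z (Set.Icc a b))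
    {t : ℝ} (ht : t ∈ Set.Icc a b) :
    iteratedDerivWithin j (fun s => x s - z s) (Set.Icc a b) t =
      iteratedDerivWithin j x (Set.Icc a b) t - iteratedDerivWithin j z (Set.Icc a b) t :=
  iteratedDerivWithin_sub ht (uniqueDiffOn_Icc hab) ((hx.of_le (by exact_mod_cast hj)) t ht)
    ((hz.of_le (by exact_mod_cast hj)) t ht)

lemma HolMem.sub (hab : a < b) {x z : ℝ → ℂ} (hx : HolMem a b p α x) (hz : HolMem a b p α z) :
    HolMem a b p α (fun t => x t - z t) := by
  obtain ⟨hcx, Cx, hCx⟩ := hx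
  obtain ⟨hcz, Cz, hCz⟩ := hz
  refine ⟨hcx.sub hcz, Cx + Cz, fun t₁ h₁ t₂ h₂ hlt => ?_⟩
  rw [iteratedDerivWithin_Icc_sub hab le_rfl hcx hcz h₁,
    iteratedDerivWithin_Icc_sub hab le_rfl hcx hcz h₂, sub_sub_sub_comm, add_mul]
  exact (norm_sub_le _ _).trans (add_le_add (hCx t₁ h₁ t₂ h₂ hlt) (hCz t₁ h₁ t₂ h₂ hlt))

lemma sSup_derivNormSet_sub_le (hab : a < b) {j : ℕ} (hj : j ≤ p) {x z : ℝ → ℂ}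
    (hx : ContDiffOn ℝ p x (Set.Icc a b)) (hz : ContDiffOn ℝ p z (Set.Icc a b)) :
    sSup (derivNormSet a b j (fun t => x t - z t)) ≤
      sSup (derivNormSet a b j x) + sSup (derivNormSet a b j z) := by
  refine Real.sSup_le ?_ (add_nonneg (sSup_derivNormSet_nonneg j x)
    (sSup_derivNormSet_nonneg j z))
  rintro s ⟨t, ht, rfl⟩
  rw [iteratedDerivWithin_Icc_sub hab hj hx hz ht]
  exact (norm_sub_le _ _).trans (add_le_add
    (le_csSup (derivNormSet_bddAbove hab hj hx) ⟨t, ht, rfl⟩)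
    (le_csSup (derivNormSet_bddAbove hab hj hz) ⟨t, ht, rfl⟩))

lemma sSup_holQuotSet_sub_le (hab : a < b) {x z : ℝ → ℂ}
    (hx : HolMem a b p α x) (hz : HolMem a b p α z) :
    sSup (holQuotSet a b p α (fun t => x t - z t)) ≤
      sSup (holQuotSet a b p α x) + sSup (holQuotSet a b p α z) := by
  refine Real.sSup_le ?_ (add_nonneg (sSup_holQuotSet_nonneg x) (sSup_holQuotSet_nonneg z))
  rintro s ⟨t₁, h₁, t₂, h₂, hlt, rfl⟩
  rw [iteratedDerivWithin_Icc_sub hab le_rfl hx.1 hz.1 h₁,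
    iteratedDerivWithin_Icc_sub hab le_rfl hx.1 hz.1 h₂, sub_sub_sub_comm]
  calc ‖_ - _‖ / (t₂ - t₁) ^ α
      ≤ (‖iteratedDerivWithin p x (Set.Icc a b) t₂ - iteratedDerivWithin p x (Set.Icc a b) t₁‖ +
          ‖iteratedDerivWithin p z (Set.Icc a b) t₂ - iteratedDerivWithin p z (Set.Icc a b) t₁‖) /
          (t₂ - t₁) ^ α := by
        gcongr
        exact norm_sub_le _ _
    _ ≤ _ := by
        rw [add_div]
        exact add_le_add (le_csSup (holQuotSet_bddAbove hx) ⟨t₁, h₁, t₂, h₂, hlt, rfl⟩)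
          (le_csSup (holQuotSet_bddAbove hz) ⟨t₁, h₁, t₂, h₂, hlt, rfl⟩)

lemma holNorm_sub_le (hab : a < b) {x z : ℝ → ℂ} (hx : HolMem a b p α x)
    (hz : HolMem a b p α z) :
    holNorm a b p α (fun t => x t - z t) ≤ holNorm a b p α x + holNorm a b p α z := by
  rw [holNorm_eq, holNorm_eq, holNorm_eq, add_add_add_comm, ← Finset.sum_add_distrib]
  refine add_le_add (Finset.sum_le_sum fun j hj => ?_) (sSup_holQuotSet_sub_le hab hx hz)
  exact sSup_derivNormSet_sub_le hab (Nat.lt_succ_iff.1 (Finset.mem_range.1 hj)) hx.1 hz.1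

end HolderNorm

section VectorHolder

variable {a b : ℝ} {p : ℕ} {α : ℝ} {k : ℕ}

lemma vHolNorm_nonneg (x : ℝ → Fin k → ℂ) : 0 ≤ vHolNorm a b p α x :=
  Finset.sum_nonneg fun _ _ => holNorm_nonneg _

lemma vHolNorm_const_smul (τ : ℂ) (x : ℝ → Fin k → ℂ) :
    vHolNorm a b p α (fun t => τ • x t) = ‖τ‖ * vHolNorm a b p α x := by
  rw [vHolNorm, vHolNorm, Finset.mul_sum]
  exact Finset.sum_congr rfl fun i _ => holNorm_const_smul τ (fun t => x t i)

lemma vHolNorm_zero : vHolNorm a b p α (fun _ => (0 : Fin k → ℂ)) = 0 :=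
  Finset.sum_eq_zero fun _ _ => holNorm_zero

lemma vHolMem.zero : vHolMem a b p α (fun _ => (0 : Fin k → ℂ)) :=
  fun _ => HolMem.zero

lemma vHolMem.const_smul {x : ℝ → Fin k → ℂ} (hx : vHolMem a b p α x) (τ : ℂ) :
    vHolMem a b p α (fun t => τ • x t) :=
  fun i => (hx i).const_smul τ

lemma vHolMem.sub (hab : a < b) {x z : ℝ → Fin k → ℂ} (hx : vHolMem a b p α x)
    (hz : vHolMem a b p α z) : vHolMem a b p α (fun t => x t - z t) :=
  fun i => (hx i).sub hab (hz i)

lemma vHolNorm_sub_le (hab : a < b) {x z : ℝ → Fin k → ℂ} (hx : vHolMem a b p α x)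
    (hz : vHolMem a b p α z) :
    vHolNorm a b p α (fun t => x t - z t) ≤ vHolNorm a b p α x + vHolNorm a b p α z := by
  rw [vHolNorm, vHolNorm, vHolNorm, ← Finset.sum_add_distrib]
  exact Finset.sum_le_sum fun i _ => holNorm_sub_le hab (hx i) (hz i)

lemma vHolNorm_le_add_sub (hab : a < b) {x z : ℝ → Fin k → ℂ} (hx : vHolMem a b p α x)
    (hz : vHolMem a b p α z) :
    vHolNorm a b p α z ≤ vHolNorm a b p α x + vHolNorm a b p α (fun t => x t - z t) := by
  simpa using vHolNorm_sub_le hab hx (hx.sub hab hz)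

lemma vDeriv_const_smul (q : ℕ) (τ : ℂ) (y : ℝ → Fin k → ℂ) (t : ℝ) :
    vDeriv a b q (fun s => τ • y s) t = τ • vDeriv a b q y t := by
  ext i
  simp [vDeriv]

end VectorHolder

section Solutions

variable {a b : ℝ} {n : ℕ} {α : ℝ} {r m : ℕ} {A : Fin r → ℝ → Matrix (Fin m) (Fin m) ℂ}
  {B : (ℝ → Fin m → ℂ) →ₗ[ℂ] (Fin (r * m) → ℂ)}

lemma Lop_const_smul (τ : ℂ) (y : ℝ → Fin m → ℂ) (t : ℝ) :
    Lop a b r A (fun s => τ • y s) t = τ • Lop a b r A y t := by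
  simp only [Lop, vDeriv_const_smul, Matrix.mulVec_smul, smul_add, Finset.smul_sum]

lemma IsSol.const_smul {f : ℝ → Fin m → ℂ} {c : Fin (r * m) → ℂ} {y : ℝ → Fin m → ℂ}
    (h : IsSol a b n α r m A B f c y) (τ : ℂ) :
    IsSol a b n α r m A B (fun t => τ • f t) (τ • c) (fun t => τ • y t) := by
  refine ⟨h.1.const_smul τ, fun t ht => by rw [Lop_const_smul, h.2.1 t ht], ?_⟩
  change B (τ • y) = τ • c
  rw [map_smul, h.2.2]

lemma isSol_zero : IsSol a b n α r m A B (fun _ => 0) 0 (fun _ => 0) :=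
  ⟨vHolMem.zero, fun t _ => by simpa using Lop_const_smul (a := a) (b := b) (A := A) 0 0 t,
    map_zero B⟩

lemma IsSol.exists_normalized {κ : ℝ} (hκ : 0 ≤ κ) {f : ℝ → Fin m → ℂ} {c : Fin (r * m) → ℂ}
    {y : ℝ → Fin m → ℂ} (hf : vHolMem a b n α f) (hy : IsSol a b n α r m A B f c y)
    (hlt : κ * (vHolNorm a b n α f + ‖c‖) < vHolNorm a b (n + r) α y) :
    ∃ f' c' y', vHolMem a b n α f' ∧ IsSol a b n α r m A B f' c' y' ∧
      κ * (vHolNorm a b n α f' + ‖c'‖) < 1 ∧ vHolNorm a b (n + r) α y' = 1 := by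
  have hpos : 0 < vHolNorm a b (n + r) α y :=
    (mul_nonneg hκ (add_nonneg (vHolNorm_nonneg f) (norm_nonneg c))).trans_lt hlt
  set τ : ℂ := (((vHolNorm a b (n + r) α y)⁻¹ : ℝ) : ℂ)
  have hτ : ‖τ‖ = (vHolNorm a b (n + r) α y)⁻¹ := by
    rw [Complex.norm_real, Real.norm_of_nonneg (inv_nonneg.2 hpos.le)]
  refine ⟨_, τ • c, _, hf.const_smul τ, hy.const_smul τ, ?_, ?_⟩
  · rw [vHolNorm_const_smul, norm_smul, ← mul_add, hτ, mul_left_comm, ← div_eq_inv_mul,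
      div_lt_one hpos]
    exact hlt
  · rw [vHolNorm_const_smul, hτ, inv_mul_cancel₀ hpos.ne']

end Solutions

lemma Function.extend_apply_eq_or {α β γ : Type*} (f : α → β) (g : α → γ) (e : β → γ) (x : β) :
    (∃ i, f i = x ∧ Function.extend f g e x = g i) ∨ Function.extend f g e x = e x := by
  classical
  rw [Function.extend_def]
  split_ifs with h
  exacts [Or.inl ⟨_, Classical.choose_spec h, rfl⟩, Or.inr rfl]

lemma Function.exists_extend_apply_eq {α β γ : Type*} (f : α → β) (g : α → γ) (e : β → γ)
    (i : α) : ∃ j, Function.extend f g e (f i) = g j := by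
  classical
  exact ⟨_, by rw [Function.extend_def, dif_pos ⟨i, rfl⟩]⟩

/-- Near `x₀` only the points `ε k` with large `k` remain. -/
lemma Function.tendsto_extend_nhds {X β : Type*} [TopologicalSpace X] [T1Space X] {x₀ : X}
    {ε : ℕ → X} (hε : ∀ k, ε k ≠ x₀) {u : ℕ → β} {F : Filter β} (hu : Tendsto u atTop F)
    {d : β} (hd : pure d ≤ F) : Tendsto (Function.extend ε u fun _ => d) (𝓝 x₀) F := by
  intro s hs
  obtain ⟨N, hN⟩ := eventually_atTop.1 (hu hs)
  have hfar : ∀ᶠ x in 𝓝 x₀, ∀ k ∈ Set.Iio N, x ≠ ε k :=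
    (Set.finite_Iio N).eventually_all.2 fun k _ => eventually_ne_nhds (hε k).symm
  refine Filter.mem_map.2 (hfar.mono fun x hx => ?_)
  rcases Function.extend_apply_eq_or ε u (fun _ => d) x with ⟨k, rfl, hk⟩ | hx'
  · rw [hk]
    exact hN k (not_lt.1 fun hlt => hx k hlt rfl)
  · rw [hx']
    exact pure_le_iff.1 hd s hs

namespace CondStarStar

variable {a b : ℝ} {n : ℕ} {α : ℝ} {r m : ℕ} {ε₁ : ℝ}
  {A : ℝ → Fin r → ℝ → Matrix (Fin m) (Fin m) ℂ}
  {B : ℝ → (ℝ → Fin m → ℂ) →ₗ[ℂ] (Fin (r * m) → ℂ)}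

lemma tendsto_of_const_data (hss : CondStarStar a b n α r m ε₁ A B) {f : ℝ → Fin m → ℂ}
    (hf : vHolMem a b n α f) {c : Fin (r * m) → ℂ} {y : ℝ → ℝ → Fin m → ℂ}
    (hy : ∀ ε ∈ Set.Ico (0 : ℝ) ε₁, IsSol a b n α r m (A ε) (B ε) f c (y ε)) :
    Tendsto (fun ε => vHolNorm a b (n + r) α (fun t => y ε t - y 0 t)) (𝓝[>] 0) (𝓝 0) :=
  hss (fun _ => f) (fun _ => c) y (fun ε hε => ⟨hf, hy ε hε⟩)
    (by simpa only [sub_self, vHolNorm_zero] using tendsto_const_nhds) tendsto_const_nhds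

/-- Glue the solutions into one family indexed by `ε`, zero off the sequence, and apply (∗∗). -/
lemma exists_vHolNorm_lt_of_seq (hss : CondStarStar a b n α r m ε₁ A B) {ε : ℕ → ℝ}
    (hε0 : ∀ k, ε k ≠ 0) (hε : Tendsto ε atTop (𝓝[>] 0)) {f : ℕ → ℝ → Fin m → ℂ}
    {c : ℕ → Fin (r * m) → ℂ} {y : ℕ → ℝ → Fin m → ℂ}
    (hsol : ∀ k, vHolMem a b n α (f k) ∧ IsSol a b n α r m (A (ε k)) (B (ε k)) (f k) (c k) (y k))
    (hdata : Tendsto (fun k => vHolNorm a b n α (f k) + ‖c k‖) atTop (𝓝 0)) {η : ℝ}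
    (hη : 0 < η) : ∃ k, vHolNorm a b (n + r) α (y k) < η := by
  let size : (ℝ → Fin m → ℂ) × (Fin (r * m) → ℂ) × (ℝ → Fin m → ℂ) → ℝ :=
    fun u => vHolNorm a b n α u.1 + ‖u.2.1‖
  let U := Function.extend ε (fun k => (f k, c k, y k)) fun _ => 0
  have hU0 : U 0 = 0 := Function.extend_apply' _ _ _ fun ⟨k, hk⟩ => hε0 k hk
  have hsize0 : size 0 = 0 := by
    change vHolNorm a b n α (fun _ => 0) + ‖(0 : Fin (r * m) → ℂ)‖ = 0
    rw [vHolNorm_zero, norm_zero, add_zero]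
  have hpure : pure 0 ≤ comap size (𝓝 0) := by
    rw [← map_le_iff_le_comap, map_pure, hsize0]
    exact pure_le_nhds 0
  have hu : Tendsto (fun k => (f k, c k, y k)) atTop (comap size (𝓝 0)) :=
    tendsto_comap_iff.2 hdata
  have hU : Tendsto U (𝓝 0) (comap size (𝓝 0)) := Function.tendsto_extend_nhds hε0 hu hpure
  have hsize : Tendsto (fun t => size (U t)) (𝓝[>] 0) (𝓝 0) :=
    (tendsto_comap_iff.1 hU).mono_left nhdsWithin_le_nhds
  have hfam : ∀ t ∈ Set.Ico (0 : ℝ) ε₁, vHolMem a b n α (U t).1 ∧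
      IsSol a b n α r m (A t) (B t) (U t).1 (U t).2.1 (U t).2.2 := by
    intro t _
    rcases Function.extend_apply_eq_or ε (fun k => (f k, c k, y k)) (fun _ => 0) t with
      ⟨k, rfl, hk⟩ | hk
    · rw [show U (ε k) = (f k, c k, y k) from hk]
      exact hsol k
    · rw [show U t = 0 from hk]
      exact ⟨vHolMem.zero, isSol_zero⟩
  have hf : Tendsto (fun t => vHolNorm a b n α (fun s => (U t).1 s - (U 0).1 s)) (𝓝[>] 0)
      (𝓝 0) := by
    simp only [hU0, Prod.fst_zero, Pi.zero_apply, sub_zero]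
    exact squeeze_zero (fun t => vHolNorm_nonneg _)
      (fun t => le_add_of_nonneg_right (norm_nonneg _)) hsize
  have hc : Tendsto (fun t => (U t).2.1) (𝓝[>] 0) (𝓝 (U 0).2.1) := by
    simp only [hU0, Prod.fst_zero, Prod.snd_zero]
    rw [tendsto_zero_iff_norm_tendsto_zero]
    exact squeeze_zero (fun t => norm_nonneg _)
      (fun t => le_add_of_nonneg_left (vHolNorm_nonneg _)) hsize
  have hy := hss (fun t => (U t).1) (fun t => (U t).2.1) (fun t => (U t).2.2) hfam hf hc
  simp only [hU0, Prod.snd_zero, Pi.zero_apply, sub_zero] at hy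
  obtain ⟨k, hk⟩ := ((hy.comp hε).eventually (gt_mem_nhds hη)).exists
  obtain ⟨j, hj⟩ := Function.exists_extend_apply_eq ε (fun k => (f k, c k, y k)) (fun _ => 0) k
  refine ⟨j, ?_⟩
  simpa only [Function.comp_apply, U, hj] using hk

lemma exists_bound_Ioo (hss : CondStarStar a b n α r m ε₁ A B) (hε₁ : 0 < ε₁) :
    ∃ κ δ : ℝ, 0 < κ ∧ 0 < δ ∧ δ < ε₁ ∧
      ∀ ε ∈ Set.Ioo (0 : ℝ) δ, ∀ f c y, vHolMem a b n α f →
        IsSol a b n α r m (A ε) (B ε) f c y →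
          vHolNorm a b (n + r) α y ≤ κ * (vHolNorm a b n α f + ‖c‖) := by
  by_contra! hunbdd
  have hbad : ∀ k : ℕ, ∃ ε ∈ Set.Ioo (0 : ℝ) (1 / ((k : ℝ) + 1)), ∃ f c y,
      vHolMem a b n α f ∧ IsSol a b n α r m (A ε) (B ε) f c y ∧
        ((k : ℝ) + 1) * (vHolNorm a b n α f + ‖c‖) < 1 ∧ vHolNorm a b (n + r) α y = 1 := by
    intro k
    obtain ⟨ε, hε, f, c, y, hf, hy, hlt⟩ := hunbdd ((k : ℝ) + 1) (min (ε₁ / 2) (1 / ((k : ℝ) + 1)))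
      (by positivity) (by positivity) ((min_le_left _ _).trans_lt (half_lt_self hε₁))
    exact ⟨ε, ⟨hε.1, hε.2.trans_le (min_le_right _ _)⟩,
      hy.exists_normalized (by positivity) hf hlt⟩
  choose ε hε f c y hf hy hdata hnorm using hbad
  have hε0 : Tendsto ε atTop (𝓝[>] 0) :=
    tendsto_nhdsWithin_iff.2 ⟨squeeze_zero (fun k => (hε k).1.le) (fun k => (hε k).2.le)
      tendsto_one_div_add_atTop_nhds_zero_nat, Eventually.of_forall fun k => (hε k).1⟩
  have hdata0 : Tendsto (fun k => vHolNorm a b n α (f k) + ‖c k‖) atTop (𝓝 0) := by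
    refine squeeze_zero (fun k => add_nonneg (vHolNorm_nonneg _) (norm_nonneg _)) (fun k => ?_)
      tendsto_one_div_add_atTop_nhds_zero_nat
    rw [le_div_iff₀ (by positivity), mul_comm]
    exact (hdata k).le
  obtain ⟨k, hk⟩ := hss.exists_vHolNorm_lt_of_seq (fun k => (hε k).1.ne') hε0
    (fun k => ⟨hf k, hy k⟩) hdata0 one_pos
  exact hk.ne (hnorm k)

lemma bound_at_zero_of_bound_Ioo (hss : CondStarStar a b n α r m ε₁ A B)
    (hstar : CondStar a b n α r m ε₁ A B) (hab : a < b) {κ δ : ℝ} (hδ : 0 < δ) (hδε₁ : δ ≤ ε₁)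
    (hbound : ∀ ε ∈ Set.Ioo (0 : ℝ) δ, ∀ f c y, vHolMem a b n α f →
      IsSol a b n α r m (A ε) (B ε) f c y →
        vHolNorm a b (n + r) α y ≤ κ * (vHolNorm a b n α f + ‖c‖))
    {f : ℝ → Fin m → ℂ} {c : Fin (r * m) → ℂ} {y : ℝ → Fin m → ℂ} (hf : vHolMem a b n α f)
    (hy : IsSol a b n α r m (A 0) (B 0) f c y) :
    vHolNorm a b (n + r) α y ≤ κ * (vHolNorm a b n α f + ‖c‖) := by
  classical
  let Y : ℝ → ℝ → Fin m → ℂ := fun ε =>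
    if h : ε ∈ Set.Ioo 0 ε₁ then (hstar ε (Set.Ioo_subset_Ico_self h) f hf c).choose else y
  have hY0 : Y 0 = y := dif_neg fun h => lt_irrefl 0 h.1
  have hY : ∀ ε ∈ Set.Ico (0 : ℝ) ε₁, IsSol a b n α r m (A ε) (B ε) f c (Y ε) := by
    intro ε hε
    rcases hε.1.eq_or_lt with rfl | hpos
    · rwa [hY0]
    · have h : ε ∈ Set.Ioo 0 ε₁ := ⟨hpos, hε.2⟩
      simpa only [Y, dif_pos h] using (hstar ε hε f hf c).choose_spec.1
  have hconv := hss.tendsto_of_const_data hf hY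
  rw [hY0] at hconv
  refine ge_of_tendsto (by simpa using hconv.const_add (κ * (vHolNorm a b n α f + ‖c‖))) ?_
  filter_upwards [Ioo_mem_nhdsGT hδ] with ε hε
  have hYε := hY ε ⟨hε.1.le, hε.2.trans_le hδε₁⟩
  calc vHolNorm a b (n + r) α y
      ≤ vHolNorm a b (n + r) α (Y ε) + vHolNorm a b (n + r) α (fun t => Y ε t - y t) :=
        vHolNorm_le_add_sub hab hYε.1 hy.1
    _ ≤ _ := add_le_add_left (hbound ε hε f c (Y ε) hf hYε) _

end CondStarStar

theorem inverse_operators_strong_convergence_and_bound_general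
    (a b : ℝ) (hab : a < b) (n : ℕ) (α : ℝ) (m r : ℕ)
    (A : ℝ → Fin r → ℝ → Matrix (Fin m) (Fin m) ℂ)
    (B : ℝ → (ℝ → (Fin m → ℂ)) →ₗ[ℂ] (Fin (r * m) → ℂ))
    (ε₁ : ℝ) (hε₁0 : 0 < ε₁)
    (hstar : CondStar a b n α r m ε₁ A B)
    (hstarstar : CondStarStar a b n α r m ε₁ A B) :
    (∀ ε ∈ Set.Ico (0 : ℝ) ε₁, ∀ f : ℝ → (Fin m → ℂ), vHolMem a b n α f →
      ∀ c : Fin (r * m) → ℂ,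
        ∃ y, IsSol a b n α r m (A ε) (B ε) f c y ∧
          ∀ y', IsSol a b n α r m (A ε) (B ε) f c y' → Set.EqOn y' y (Set.Icc a b)) ∧
    (∀ f : ℝ → (Fin m → ℂ), vHolMem a b n α f → ∀ c : Fin (r * m) → ℂ,
      ∀ y : ℝ → ℝ → (Fin m → ℂ),
        (∀ ε ∈ Set.Ico (0 : ℝ) ε₁, IsSol a b n α r m (A ε) (B ε) f c (y ε)) →
        Tendsto (fun ε => vHolNorm a b (n + r) α (fun t => y ε t - y 0 t))
          (nhdsWithin 0 (Set.Ioi 0)) (nhds 0)) ∧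
    (∃ κ₂ ε₂ : ℝ, 0 < κ₂ ∧ 0 < ε₂ ∧ ε₂ < ε₁ ∧
      ∀ ε ∈ Set.Ico (0 : ℝ) ε₂, ∀ f : ℝ → (Fin m → ℂ), ∀ c : Fin (r * m) → ℂ,
        ∀ y : ℝ → (Fin m → ℂ), vHolMem a b n α f → IsSol a b n α r m (A ε) (B ε) f c y →
          vHolNorm a b (n + r) α y ≤ κ₂ * (vHolNorm a b n α f + ‖c‖)) := by
  refine ⟨hstar, fun f hf c y hy => hstarstar.tendsto_of_const_data hf hy, ?_⟩
  obtain ⟨κ, δ, hκ, hδ, hδε₁, hbound⟩ := hstarstar.exists_bound_Ioo hε₁0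
  refine ⟨κ, δ, hκ, hδ, hδε₁, fun ε hε f c y hf hy => ?_⟩
  rcases hε.1.eq_or_lt with rfl | hpos
  · exact hstarstar.bound_at_zero_of_bound_Ioo hstar hab hδ hδε₁.le hbound hf hy
  · exact hbound ε ⟨hpos, hε.2⟩ f c y hf hy

/-- If the solution depends continuously on ε at ε = 0 ((∗) and (∗∗)), then for every
ε ∈ [0, ε₁) the operator (L(ε), B(ε)) is invertible, the inverses converge strongly to
the inverse at ε = 0, and their norms are uniformly bounded for small ε. -/
theorem inverse_operators_strong_convergence_and_bound
    (a b : ℝ) (hab : a < b) (n : ℕ) (α : ℝ) (hα0 : 0 < α) (hα1 : α ≤ 1)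
    (m r : ℕ) (hm : 1 ≤ m) (hr : 2 ≤ r) (ε₀ : ℝ) (hε₀ : 0 < ε₀)
    (A : ℝ → Fin r → ℝ → Matrix (Fin m) (Fin m) ℂ)
    (hA : ∀ ε ∈ Set.Ico (0 : ℝ) ε₀, ∀ j, mHolMem a b n α (A ε j))
    (B : ℝ → (ℝ → (Fin m → ℂ)) →ₗ[ℂ] (Fin (r * m) → ℂ))
    (hB : ∀ ε ∈ Set.Ico (0 : ℝ) ε₀, ∃ K : ℝ, ∀ y : ℝ → (Fin m → ℂ),
      vHolMem a b (n + r) α y → ‖B ε y‖ ≤ K * vHolNorm a b (n + r) α y)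
    (ε₁ : ℝ) (hε₁0 : 0 < ε₁) (hε₁ : ε₁ < ε₀)
    (hstar : CondStar a b n α r m ε₁ A B)
    (hstarstar : CondStarStar a b n α r m ε₁ A B) :
    (∀ ε ∈ Set.Ico (0 : ℝ) ε₁, ∀ f : ℝ → (Fin m → ℂ), vHolMem a b n α f →
      ∀ c : Fin (r * m) → ℂ,
        ∃ y, IsSol a b n α r m (A ε) (B ε) f c y ∧
          ∀ y', IsSol a b n α r m (A ε) (B ε) f c y' → Set.EqOn y' y (Set.Icc a b)) ∧
    (∀ f : ℝ → (Fin m → ℂ), vHolMem a b n α f → ∀ c : Fin (r * m) → ℂ,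
      ∀ y : ℝ → ℝ → (Fin m → ℂ),
        (∀ ε ∈ Set.Ico (0 : ℝ) ε₁, IsSol a b n α r m (A ε) (B ε) f c (y ε)) →
        Tendsto (fun ε => vHolNorm a b (n + r) α (fun t => y ε t - y 0 t))
          (nhdsWithin 0 (Set.Ioi 0)) (nhds 0)) ∧
    (∃ κ₂ ε₂ : ℝ, 0 < κ₂ ∧ 0 < ε₂ ∧ ε₂ < ε₁ ∧
      ∀ ε ∈ Set.Ico (0 : ℝ) ε₂, ∀ f : ℝ → (Fin m → ℂ), ∀ c : Fin (r * m) → ℂ,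
        ∀ y : ℝ → (Fin m → ℂ), vHolMem a b n α f → IsSol a b n α r m (A ε) (B ε) f c y →
          vHolNorm a b (n + r) α y ≤ κ₂ * (vHolNorm a b n α f + ‖c‖)) :=
  inverse_operators_strong_convergence_and_bound_general a b hab n α m r A B ε₁ hε₁0 hstar hstarstar
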